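/- Let k ≥ 2 be an integer, a = π/k, and let W be a complex-valued integrable function on (0,π) such that ∑_{j=0}^{⌊(k−1)/2⌋} W(2ja + t) + ∑_{j=1}^{⌊k/2⌋} W(2ja − t) = 0 for almost every t ∈ (0,a). Then ∫_0^π W(t)·cos(k·n·t) dt = 0 for every integer n ≥ 0. -/

import Mathlib

/-!
Cut `[0, π]` into the `k` intervals `[j a, (j + 1) a]` and bring each one back to `[0, a]`: the
even-indexed ones by the translation `t ↦ 2 m a + t`, the odd-indexed ones by the reflection
`t ↦ 2 m a - t`. Since `k a = π`, both maps leave `cos (k n t)` unchanged, so the integral becomes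
`∫₀ᵃ (degeneration sum)(t) · cos (k n t) dt`, which vanishes because the sum does almost everywhere.
-/

open MeasureTheory

open Finset in
theorem Finset.sum_range_eq_sum_even_add_sum_odd {M : Type*} [AddCommMonoid M] (g : ℕ → M)
    {k : ℕ} (hk : 1 ≤ k) :
    ∑ j ∈ range k, g j =
      ∑ m ∈ range ((k - 1) / 2 + 1), g (2 * m) + ∑ m ∈ Icc 1 (k / 2), g (2 * m - 1) := by
  induction k, hk using Nat.le_induction with
  | base => simp
  | succ k hk ih =>
    rw [sum_range_succ, ih]
    rcases Nat.even_or_odd' k with ⟨t, rfl | rfl⟩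
    · rw [show (2 * t - 1) / 2 + 1 = t by omega, show 2 * t / 2 = t by omega,
        show (2 * t + 1 - 1) / 2 + 1 = t + 1 by omega, show (2 * t + 1) / 2 = t by omega,
        sum_range_succ]
      abel
    · rw [show (2 * t + 1 - 1) / 2 + 1 = t + 1 by omega, show (2 * t + 1) / 2 = t by omega,
        show (2 * t + 1 + 1 - 1) / 2 + 1 = t + 1 by omega,
        show (2 * t + 1 + 1) / 2 = t + 1 by omega, sum_Icc_succ_top (by omega),
        show 2 * (t + 1) - 1 = 2 * t + 1 by omega]
      abel

theorem Nat.cast_mul_mem_uIcc {i k : ℕ} (h : i ≤ k) (a : ℝ) :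
    (i : ℝ) * a ∈ Set.uIcc 0 ((k : ℝ) * a) := by
  have hik : (i : ℝ) ≤ k := by exact_mod_cast h
  rcases le_total 0 a with ha | ha
  · exact Set.mem_uIcc_of_le (by positivity) (mul_le_mul_of_nonneg_right hik ha)
  · exact Set.mem_uIcc_of_ge (mul_le_mul_of_nonpos_right hik ha)
      (mul_nonpos_of_nonneg_of_nonpos i.cast_nonneg ha)

section Fold

open Finset

variable {E : Type*} [NormedAddCommGroup E] {f : ℝ → E} {a : ℝ} {k : ℕ}

theorem IntervalIntegrable.mono_natCast_mul (hf : IntervalIntegrable f volume 0 (k * a))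
    {i j : ℕ} (hi : i ≤ k) (hj : j ≤ k) : IntervalIntegrable f volume (i * a) (j * a) :=
  hf.mono_set (Set.uIcc_subset_uIcc (Nat.cast_mul_mem_uIcc hi a) (Nat.cast_mul_mem_uIcc hj a))

variable [NormedSpace ℝ E]

theorem integral_zero_nat_mul_eq_sum_even_add_sum_odd (hk : 1 ≤ k)
    (hf : IntervalIntegrable f volume 0 (k * a)) :
    ∫ t in 0..k * a, f t =
      (∑ m ∈ range ((k - 1) / 2 + 1), ∫ t in 0..a, f (2 * m * a + t)) +
        ∑ m ∈ Icc 1 (k / 2), ∫ t in 0..a, f (2 * m * a - t) := by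
  have hsplit : ∫ t in 0..k * a, f t = ∑ j ∈ range k, ∫ t in j * a..(j + 1) * a, f t := by
    simpa using (intervalIntegral.sum_integral_adjacent_intervals (a := fun j : ℕ ↦ (j : ℝ) * a)
      fun j hj ↦ hf.mono_natCast_mul hj.le hj).symm
  rw [hsplit, sum_range_eq_sum_even_add_sum_odd (fun j : ℕ ↦ ∫ t in j * a..(j + 1) * a, f t) hk]
  congr 1
  · refine sum_congr rfl fun m _ ↦ ?_
    rw [intervalIntegral.integral_comp_add_left]
    congr 1 <;> push_cast <;> ring
  · refine sum_congr rfl fun m hm ↦ ?_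
    have hcast : ((2 * m - 1 : ℕ) : ℝ) = 2 * m - 1 := by
      rw [Nat.cast_sub (by grind), Nat.cast_mul, Nat.cast_ofNat, Nat.cast_one]
    rw [intervalIntegral.integral_comp_sub_left, hcast]
    congr 1 <;> ring

theorem integral_zero_nat_mul_eq_integral_fold (hk : 1 ≤ k)
    (hf : IntervalIntegrable f volume 0 (k * a)) :
    ∫ t in 0..k * a, f t =
      ∫ t in 0..a, ((∑ m ∈ range ((k - 1) / 2 + 1), f (2 * m * a + t)) +
        ∑ m ∈ Icc 1 (k / 2), f (2 * m * a - t)) := by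
  have heven : ∀ m ∈ range ((k - 1) / 2 + 1),
      IntervalIntegrable (fun t ↦ f (2 * m * a + t)) volume 0 a := by
    intro m hm
    have h := (hf.mono_natCast_mul (i := 2 * m) (j := 2 * m + 1) (by grind) (by grind))
      |>.comp_add_left (2 * m * a)
    convert h using 1 <;> push_cast <;> ring
  have hodd : ∀ m ∈ Icc 1 (k / 2),
      IntervalIntegrable (fun t ↦ f (2 * m * a - t)) volume 0 a := by
    intro m hm
    have h := (hf.mono_natCast_mul (i := 2 * m) (j := 2 * m - 1) (by grind) (by grind))
      |>.comp_sub_left (2 * m * a)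
    rw [Nat.cast_sub (by grind)] at h
    convert h using 1 <;> push_cast <;> ring
  rw [integral_zero_nat_mul_eq_sum_even_add_sum_odd hk hf,
    ← intervalIntegral.integral_finsetSum heven, ← intervalIntegral.integral_finsetSum hodd,
    ← intervalIntegral.integral_add]
  · simpa only [sum_fn] using IntervalIntegrable.sum _ heven
  · simpa only [sum_fn] using IntervalIntegrable.sum _ hodd

end Fold

theorem Complex.cos_nat_mul_mul_two_mul_pi_div_add {k : ℕ} (hk : k ≠ 0) (n m : ℕ) (t : ℝ) :
    Complex.cos (k * n * ((2 * m * (Real.pi / k) + t : ℝ) : ℂ)) = Complex.cos (k * n * t) := by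
  have hk : (k : ℂ) ≠ 0 := by exact_mod_cast hk
  have harg : (k : ℂ) * n * ((2 * m * (Real.pi / k) + t : ℝ) : ℂ) =
      k * n * t + (m * n : ℕ) * (2 * Real.pi) := by
    push_cast
    field_simp
    ring
  rw [harg, Complex.cos_add_nat_mul_two_pi]

theorem Complex.cos_nat_mul_mul_two_mul_pi_div_sub {k : ℕ} (hk : k ≠ 0) (n m : ℕ) (t : ℝ) :
    Complex.cos (k * n * ((2 * m * (Real.pi / k) - t : ℝ) : ℂ)) = Complex.cos (k * n * t) := by
  have hk : (k : ℂ) ≠ 0 := by exact_mod_cast hk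
  have harg : (k : ℂ) * n * ((2 * m * (Real.pi / k) - t : ℝ) : ℂ) =
      -(k * n * t) + (m * n : ℕ) * (2 * Real.pi) := by
    push_cast
    field_simp
    ring
  rw [harg, Complex.cos_add_nat_mul_two_pi, Complex.cos_neg]

theorem integral_cos_eq_zero_of_degeneration (k : ℕ) (hk : 2 ≤ k)
    (W : ℝ → ℂ) (hW : IntegrableOn W (Set.Ioo 0 Real.pi))
    (hdeg : ∀ᵐ t ∂(volume.restrict (Set.Ioo (0:ℝ) (Real.pi / k))),
      ∑ j ∈ Finset.range ((k - 1) / 2 + 1), W (2 * j * (Real.pi / k) + t) +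
        ∑ j ∈ Finset.Icc 1 (k / 2), W (2 * j * (Real.pi / k) - t) = 0) :
    ∀ n : ℕ, ∫ t in (0:ℝ)..Real.pi, W t * Complex.cos ((k : ℂ) * n * t) = 0 := by
  intro n
  have hk0 : k ≠ 0 := by omega
  have hka : (k : ℝ) * (Real.pi / k) = Real.pi := mul_div_cancel₀ _ (by exact_mod_cast hk0)
  have hf : IntervalIntegrable (fun t ↦ W t * Complex.cos ((k : ℂ) * n * t)) volume 0 Real.pi :=
    ((intervalIntegrable_iff_integrableOn_Ioo_of_le Real.pi_pos.le).2 hW).mul_continuousOn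
      (by fun_prop)
  rw [← hka] at hf ⊢
  rw [integral_zero_nat_mul_eq_integral_fold (by omega) hf,
    intervalIntegral.integral_of_le (by positivity), integral_Ioc_eq_integral_Ioo]
  refine integral_eq_zero_of_ae ?_
  filter_upwards [hdeg] with t ht
  simp only [Complex.cos_nat_mul_mul_two_mul_pi_div_add hk0,
    Complex.cos_nat_mul_mul_two_mul_pi_div_sub hk0, ← Finset.sum_mul, ← add_mul, ht, zero_mul,
    Pi.zero_apply]
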